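/- Let B ∈ ℂ^{n×n} (n ≥ 2) be Hermitian positive definite and not diagonal. Then there exist indices i ≠ j with Re(b_{ij}·(B^{-1})_{ji}) ≤ −Γ(B)/(n(n−1)) < 0, so that a greedy pivot choice (i,j) = argmin_{i≠j} Re(b_{ij}(B^{-1})_{ji}) followed by one exact pivot step decreases Γ by at least the factor (1 − 2/(n(n−1))): Γ((T^{-1})* B T^{-1}) ≤ (1 − 2/(n(n−1)))·Γ(B) for the transformation T built from any nonsingular 2×2 matrix S diagonalizing the {i,j} principal block of B. -/

import Mathlib

open Matrix
open scoped ComplexOrder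

noncomputable section

/-- `D_B^{1/2}`: the diagonal matrix whose entries are the square roots of the
diagonal entries of `B`. -/
def sqrtDiag {n : ℕ} (B : Matrix (Fin n) (Fin n) ℂ) : Matrix (Fin n) (Fin n) ℂ :=
  Matrix.diagonal fun i => (Real.sqrt (B i i).re : ℂ)

/-- The diagonal normalization `B̂ = D_B^{-1/2} B D_B^{-1/2}`. -/
def hatM {n : ℕ} (B : Matrix (Fin n) (Fin n) ℂ) : Matrix (Fin n) (Fin n) ℂ :=
  (sqrtDiag B)⁻¹ * B * (sqrtDiag B)⁻¹

/-- The potential function `Γ(B) = tr(B̂⁻¹) − n` (a real number for Hermitian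
positive definite `B`). -/
def Gamma {n : ℕ} (B : Matrix (Fin n) (Fin n) ℂ) : ℝ :=
  (Matrix.trace ((hatM B)⁻¹)).re - n

/-- The set of pivot sets: size-`k` subsets of `[n]`. -/
abbrev PivotSet (n k : ℕ) := {J : Finset (Fin n) // J.card = k}

/-- `B_{JJ}`: the `k × k` principal submatrix of `B` on the rows and columns indexed by `J`
(listed in increasing order). -/
def subJ {n k : ℕ} (J : Finset (Fin n)) (hJ : J.card = k) (B : Matrix (Fin n) (Fin n) ℂ) :
    Matrix (Fin k) (Fin k) ℂ :=
  B.submatrix (fun a => ((J.orderIsoOfFin hJ) a).val) (fun a => ((J.orderIsoOfFin hJ) a).val)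

/-- The `n × n` matrix which is `S` on the `J × J` block (after the order-preserving
identification of `J` with `{1, …, k}`) and agrees with the identity elsewhere; this is
`P_σ* [[S, 0], [0, I]] P_σ` for the order-preserving permutation `σ` with `σ(J) = [k]`. -/
def embedJ {n k : ℕ} (J : Finset (Fin n)) (hJ : J.card = k) (S : Matrix (Fin k) (Fin k) ℂ) :
    Matrix (Fin n) (Fin n) ℂ :=
  Matrix.of fun a b =>
    if ha : a ∈ J then
      if hb : b ∈ J then
        S ((J.orderIsoOfFin hJ).symm ⟨a, ha⟩) ((J.orderIsoOfFin hJ).symm ⟨b, hb⟩)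
      else 0
    else if a = b then 1 else 0

/-!
Write `C = B⁻¹`. Since `B̂⁻¹ = D_B^{1/2} C D_B^{1/2}`, the potential is `Γ(B) = Re Σᵢ bᵢᵢcᵢᵢ − n`,
and since `Σᵢⱼ bᵢⱼcⱼᵢ = tr(BC) = n`, the `n(n−1)` off-diagonal terms `Re(bᵢⱼcⱼᵢ)` sum to `−Γ(B)`;
the smallest one is at most their mean. `Γ(B) > 0` unless `B` is diagonal, because
`Γ(B) = tr((B̂ − 1)ᴴ B̂⁻¹ (B̂ − 1))` and `B̂ ≠ 1`.

A pivot on `J = {i, j}` replaces `B` by `M = TᴴBT`, where `T` is `S` on the `J`-block and the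
identity elsewhere. The diagonals of `M` and `M⁻¹` agree with those of `B` and `C` off `J`, while
`M_JJ = Sᴴ B_JJ S` is diagonal and `(M⁻¹)_JJ = S⁻¹ C_JJ S⁻ᴴ`, so
`Σ_{k ∈ J} mₖₖ(M⁻¹)ₖₖ = tr(M_JJ (M⁻¹)_JJ) = tr(B_JJ C_JJ)`. The pivot thus moves the two
off-diagonal terms of `J` onto the diagonal: `Γ(M) = Γ(B) + 2 Re(bᵢⱼcⱼᵢ)`.
-/

theorem Matrix.IsDiag.trace_hadamard {m R : Type*} [Fintype m] [CommSemiring R]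
    {D : Matrix m m R} (hD : D.IsDiag) (G : Matrix m m R) : trace (D ⊙ G) = trace (D * G) := by
  refine Finset.sum_congr rfl fun i _ => ?_
  rw [diag_apply, diag_apply, hadamard_apply, mul_apply,
    Finset.sum_eq_single i (fun j _ hji => by rw [hD hji.symm, zero_mul]) (by simp)]

theorem Matrix.sum_offDiag_mul_apply_add_trace_hadamard {m R : Type*} [Fintype m] [DecidableEq m]
    [CommSemiring R] (P Q : Matrix m m R) :
    ∑ p ∈ Finset.univ.offDiag, P p.1 p.2 * Q p.2 p.1 + trace (P ⊙ Q) = trace (P * Q) := by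
  have hprod : trace (P * Q) = ∑ p ∈ Finset.univ ×ˢ Finset.univ, P p.1 p.2 * Q p.2 p.1 := by
    rw [Finset.sum_product]
    rfl
  rw [hprod, ← Finset.diag_union_offDiag, Finset.sum_union (Finset.disjoint_diag_offDiag _),
    Finset.diag, Finset.sum_map, add_comm]
  rfl

theorem Matrix.PosDef.trace_conjTranspose_mul_mul_pos {m l 𝕜 : Type*} [Fintype m] [Fintype l]
    [RCLike 𝕜] {N : Matrix m m 𝕜} (hN : N.PosDef) {K : Matrix m l 𝕜} (hK : K ≠ 0) :
    0 < trace (Kᴴ * N * K) := by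
  classical
  obtain ⟨j, hj⟩ : ∃ j, K *ᵥ Pi.single j 1 ≠ 0 := by
    by_contra! h
    exact hK (ext fun i j => by simpa [mulVec_single_one] using congrFun (h j) i)
  refine (hN.posSemidef.conjTranspose_mul_mul_same K).trace_nonneg.lt_of_ne' fun h => ?_
  -- the `j`-th diagonal entry of `Kᴴ * N * K` is `(K eⱼ)ᴴ N (K eⱼ) > 0`
  have hpos := hN.dotProduct_mulVec_pos hj
  rw [(hN.posSemidef.conjTranspose_mul_mul_same K).trace_eq_zero_iff] at h
  simp only [star_mulVec, dotProduct_mulVec, vecMul_vecMul] at hpos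
  simp [h] at hpos

section Pivot

variable {n k : ℕ} (J : Finset (Fin n)) (hJ : J.card = k)

theorem Finset.sum_comp_orderEmbOfFin {M : Type*} [AddCommMonoid M] (f : Fin n → M) :
    ∑ m, f (J.orderEmbOfFin hJ m) = ∑ c ∈ J, f c := by
  rw [← Finset.sum_coe_sort J f]
  exact Fintype.sum_equiv (J.orderIsoOfFin hJ).toEquiv _ _ fun _ => rfl

theorem Finset.sum_univ_eq_sum_comp_orderEmbOfFin {M : Type*} [AddCommMonoid M] (f : Fin n → M)
    (hf : ∀ c ∉ J, f c = 0) : ∑ c, f c = ∑ m, f (J.orderEmbOfFin hJ m) := by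
  rw [Finset.sum_comp_orderEmbOfFin]
  exact (Finset.sum_subset J.subset_univ fun c _ hc => hf c hc).symm

theorem Finset.exists_orderEmbOfFin_eq {b : Fin n} (hb : b ∈ J) :
    ∃ q, (J.orderEmbOfFin hJ q : Fin n) = b :=
  ⟨(J.orderIsoOfFin hJ).symm ⟨b, hb⟩, by
    rw [← J.coe_orderIsoOfFin_apply, OrderIso.apply_symm_apply]⟩

theorem embedJ_apply_orderEmbOfFin (S : Matrix (Fin k) (Fin k) ℂ) (p q : Fin k) :
    embedJ J hJ S (J.orderEmbOfFin hJ p) (J.orderEmbOfFin hJ q) = S p q := by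
  simp only [embedJ, of_apply, J.orderEmbOfFin_mem, dif_pos]
  congr 1 <;> exact (J.orderIsoOfFin hJ).symm_apply_apply _

theorem embedJ_apply_of_notMem_left (S : Matrix (Fin k) (Fin k) ℂ) {a : Fin n} (ha : a ∉ J)
    (b : Fin n) : embedJ J hJ S a b = (1 : Matrix (Fin n) (Fin n) ℂ) a b := by
  simp [embedJ, ha, one_apply]

theorem embedJ_apply_of_notMem_right (S : Matrix (Fin k) (Fin k) ℂ) (a : Fin n) {b : Fin n}
    (hb : b ∉ J) : embedJ J hJ S a b = (1 : Matrix (Fin n) (Fin n) ℂ) a b := by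
  by_cases ha : a ∈ J
  · simp [embedJ, ha, hb, one_apply, ne_of_mem_of_not_mem ha hb]
  · exact embedJ_apply_of_notMem_left J hJ S ha b

theorem embedJ_mul_apply (S : Matrix (Fin k) (Fin k) ℂ) (X : Matrix (Fin n) (Fin n) ℂ)
    (p : Fin k) (b : Fin n) :
    (embedJ J hJ S * X) (J.orderEmbOfFin hJ p) b = ∑ m, S p m * X (J.orderEmbOfFin hJ m) b := by
  rw [mul_apply, Finset.sum_univ_eq_sum_comp_orderEmbOfFin J hJ]
  · simp only [embedJ_apply_orderEmbOfFin]
  · intro c hc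
    rw [embedJ_apply_of_notMem_right J hJ S _ hc,
      one_apply_ne (ne_of_mem_of_not_mem (J.orderEmbOfFin_mem hJ p) hc), zero_mul]

theorem mul_embedJ_apply (S : Matrix (Fin k) (Fin k) ℂ) (X : Matrix (Fin n) (Fin n) ℂ)
    (a : Fin n) (q : Fin k) :
    (X * embedJ J hJ S) a (J.orderEmbOfFin hJ q) = ∑ m, X a (J.orderEmbOfFin hJ m) * S m q := by
  rw [mul_apply, Finset.sum_univ_eq_sum_comp_orderEmbOfFin J hJ]
  · simp only [embedJ_apply_orderEmbOfFin]
  · intro c hc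
    rw [embedJ_apply_of_notMem_left J hJ S hc,
      one_apply_ne (ne_of_mem_of_not_mem (J.orderEmbOfFin_mem hJ q) hc).symm, mul_zero]

theorem embedJ_mul_apply_of_notMem (S : Matrix (Fin k) (Fin k) ℂ) (X : Matrix (Fin n) (Fin n) ℂ)
    {a : Fin n} (ha : a ∉ J) (b : Fin n) : (embedJ J hJ S * X) a b = X a b := by
  simp_rw [mul_apply, embedJ_apply_of_notMem_left J hJ S ha, ← mul_apply, one_mul]

theorem mul_embedJ_apply_of_notMem (S : Matrix (Fin k) (Fin k) ℂ) (X : Matrix (Fin n) (Fin n) ℂ)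
    (a : Fin n) {b : Fin n} (hb : b ∉ J) : (X * embedJ J hJ S) a b = X a b := by
  simp_rw [mul_apply, embedJ_apply_of_notMem_right J hJ S _ hb, ← mul_apply, mul_one]

theorem embedJ_one : embedJ J hJ 1 = 1 := by
  ext a b
  by_cases ha : a ∈ J
  · by_cases hb : b ∈ J
    · obtain ⟨p, rfl⟩ := J.exists_orderEmbOfFin_eq hJ ha
      obtain ⟨q, rfl⟩ := J.exists_orderEmbOfFin_eq hJ hb
      simp [embedJ_apply_orderEmbOfFin, one_apply]
    · exact embedJ_apply_of_notMem_right J hJ 1 a hb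
  · exact embedJ_apply_of_notMem_left J hJ 1 ha b

theorem embedJ_mul (S T : Matrix (Fin k) (Fin k) ℂ) :
    embedJ J hJ S * embedJ J hJ T = embedJ J hJ (S * T) := by
  ext a b
  by_cases ha : a ∈ J
  · obtain ⟨p, rfl⟩ := J.exists_orderEmbOfFin_eq hJ ha
    rw [embedJ_mul_apply]
    by_cases hb : b ∈ J
    · obtain ⟨q, rfl⟩ := J.exists_orderEmbOfFin_eq hJ hb
      simp only [embedJ_apply_orderEmbOfFin, mul_apply]
    · simp only [embedJ_apply_of_notMem_right J hJ _ _ hb,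
        one_apply_ne (ne_of_mem_of_not_mem (J.orderEmbOfFin_mem hJ _) hb), mul_zero,
        Finset.sum_const_zero]
  · rw [embedJ_mul_apply_of_notMem J hJ S _ ha, embedJ_apply_of_notMem_left J hJ _ ha,
      embedJ_apply_of_notMem_left J hJ _ ha]

theorem conjTranspose_embedJ (S : Matrix (Fin k) (Fin k) ℂ) :
    (embedJ J hJ S)ᴴ = embedJ J hJ Sᴴ := by
  ext a b
  rw [conjTranspose_apply]
  by_cases ha : a ∈ J
  · by_cases hb : b ∈ J
    · obtain ⟨p, rfl⟩ := J.exists_orderEmbOfFin_eq hJ ha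
      obtain ⟨q, rfl⟩ := J.exists_orderEmbOfFin_eq hJ hb
      simp only [embedJ_apply_orderEmbOfFin, conjTranspose_apply]
    · rw [embedJ_apply_of_notMem_left J hJ _ hb, embedJ_apply_of_notMem_right J hJ _ _ hb,
        ← conjTranspose_apply, conjTranspose_one]
  · rw [embedJ_apply_of_notMem_right J hJ _ _ ha, embedJ_apply_of_notMem_left J hJ _ ha,
      ← conjTranspose_apply, conjTranspose_one]

theorem inv_embedJ (S : Matrix (Fin k) (Fin k) ℂ) (hS : IsUnit S.det) :
    (embedJ J hJ S)⁻¹ = embedJ J hJ S⁻¹ :=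
  inv_eq_right_inv (by rw [embedJ_mul, mul_nonsing_inv S hS, embedJ_one])

theorem isUnit_det_embedJ {S : Matrix (Fin k) (Fin k) ℂ} (hS : IsUnit S.det) :
    IsUnit (embedJ J hJ S).det :=
  isUnit_det_of_right_inverse (by rw [embedJ_mul, mul_nonsing_inv S hS, embedJ_one])

theorem subJ_apply (X : Matrix (Fin n) (Fin n) ℂ) (p q : Fin k) :
    subJ J hJ X p q = X (J.orderEmbOfFin hJ p) (J.orderEmbOfFin hJ q) := rfl

theorem subJ_embedJ_mul_mul (S T : Matrix (Fin k) (Fin k) ℂ) (X : Matrix (Fin n) (Fin n) ℂ) :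
    subJ J hJ (embedJ J hJ S * X * embedJ J hJ T) = S * subJ J hJ X * T := by
  ext p q
  simp_rw [subJ_apply, mul_embedJ_apply, embedJ_mul_apply, mul_apply, Finset.sum_mul, subJ_apply]

theorem embedJ_mul_mul_apply_of_notMem (S T : Matrix (Fin k) (Fin k) ℂ)
    (X : Matrix (Fin n) (Fin n) ℂ) {a b : Fin n} (ha : a ∉ J) (hb : b ∉ J) :
    (embedJ J hJ S * X * embedJ J hJ T) a b = X a b := by
  rw [mul_embedJ_apply_of_notMem J hJ T _ a hb, embedJ_mul_apply_of_notMem J hJ S X ha]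

theorem trace_subJ_hadamard (P Q : Matrix (Fin n) (Fin n) ℂ) :
    trace (subJ J hJ P ⊙ subJ J hJ Q) = ∑ c ∈ J, P c c * Q c c :=
  J.sum_comp_orderEmbOfFin hJ fun c => P c c * Q c c

theorem trace_subJ_mul (P Q : Matrix (Fin n) (Fin n) ℂ) :
    trace (subJ J hJ P * subJ J hJ Q) = ∑ c ∈ J, ∑ d ∈ J, P c d * Q d c := by
  rw [← J.sum_comp_orderEmbOfFin hJ]
  exact Finset.sum_congr rfl fun p _ => J.sum_comp_orderEmbOfFin hJ fun d => P _ d * Q d _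

theorem trace_hadamard_eq_trace_subJ_hadamard_add (P Q : Matrix (Fin n) (Fin n) ℂ) :
    trace (P ⊙ Q) = trace (subJ J hJ P ⊙ subJ J hJ Q) + ∑ c ∈ Jᶜ, P c c * Q c c := by
  rw [trace_subJ_hadamard, Finset.sum_add_sum_compl]
  rfl

theorem trace_hadamard_conj_embedJ (B : Matrix (Fin n) (Fin n) ℂ) {S : Matrix (Fin k) (Fin k) ℂ}
    (hS : IsUnit S.det) (hD : (Sᴴ * subJ J hJ B * S).IsDiag) :
    trace (((embedJ J hJ S)ᴴ * B * embedJ J hJ S) ⊙ ((embedJ J hJ S)ᴴ * B * embedJ J hJ S)⁻¹) +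
        trace (subJ J hJ B ⊙ subJ J hJ B⁻¹) =
      trace (B ⊙ B⁻¹) + trace (subJ J hJ B * subJ J hJ B⁻¹) := by
  have hSH : IsUnit Sᴴ.det := by rw [det_conjTranspose]; exact hS.star
  have hinv : ((embedJ J hJ S)ᴴ * B * embedJ J hJ S)⁻¹ =
      embedJ J hJ S⁻¹ * B⁻¹ * embedJ J hJ Sᴴ⁻¹ := by
    rw [conjTranspose_embedJ, Matrix.mul_inv_rev, Matrix.mul_inv_rev, inv_embedJ J hJ S hS,
      inv_embedJ J hJ _ hSH, mul_assoc]
  have hcyc : trace (Sᴴ * subJ J hJ B * S * (S⁻¹ * subJ J hJ B⁻¹ * Sᴴ⁻¹)) =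
      trace (subJ J hJ B * subJ J hJ B⁻¹) := by
    rw [show Sᴴ * subJ J hJ B * S * (S⁻¹ * subJ J hJ B⁻¹ * Sᴴ⁻¹) =
        Sᴴ * (subJ J hJ B * subJ J hJ B⁻¹ * Sᴴ⁻¹) by
      simp only [mul_assoc, mul_nonsing_inv_cancel_left _ _ hS],
      trace_mul_comm, nonsing_inv_mul_cancel_right _ _ hSH]
  have houtside : ∀ c ∈ Jᶜ, ((embedJ J hJ S)ᴴ * B * embedJ J hJ S) c c *
      ((embedJ J hJ S)ᴴ * B * embedJ J hJ S)⁻¹ c c = B c c * B⁻¹ c c := fun c hc => by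
    rw [hinv, conjTranspose_embedJ, embedJ_mul_mul_apply_of_notMem J hJ _ _ _
      (Finset.mem_compl.1 hc) (Finset.mem_compl.1 hc), embedJ_mul_mul_apply_of_notMem J hJ _ _ _
      (Finset.mem_compl.1 hc) (Finset.mem_compl.1 hc)]
  rw [trace_hadamard_eq_trace_subJ_hadamard_add J hJ ((embedJ J hJ S)ᴴ * B * embedJ J hJ S),
    trace_hadamard_eq_trace_subJ_hadamard_add J hJ B, Finset.sum_congr rfl houtside, hinv,
    conjTranspose_embedJ, subJ_embedJ_mul_mul, subJ_embedJ_mul_mul, hD.trace_hadamard, hcyc]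
  ring

end Pivot

theorem trace_subJ_pair_mul {n : ℕ} {i j : Fin n} (hij : i ≠ j) (P Q : Matrix (Fin n) (Fin n) ℂ) :
    trace (subJ {i, j} (Finset.card_pair hij) P * subJ {i, j} (Finset.card_pair hij) Q) =
      trace (subJ {i, j} (Finset.card_pair hij) P ⊙ subJ {i, j} (Finset.card_pair hij) Q) +
        (P i j * Q j i + P j i * Q i j) := by
  rw [trace_subJ_mul, trace_subJ_hadamard]
  simp only [Finset.sum_pair hij]
  ring

section Gamma

variable {n : ℕ} {B : Matrix (Fin n) (Fin n) ℂ}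

theorem Matrix.PosDef.ofReal_sqrt_re_diag_mul_self (hB : B.PosDef) (i : Fin n) :
    ((√(B i i).re : ℝ) : ℂ) * ((√(B i i).re : ℝ) : ℂ) = B i i := by
  obtain ⟨hre, him⟩ := Complex.pos_iff.1 hB.diag_pos
  rw [← Complex.ofReal_mul, Real.mul_self_sqrt hre.le]
  exact Complex.ext rfl him

theorem Matrix.PosDef.ofReal_sqrt_re_diag_ne_zero (hB : B.PosDef) (i : Fin n) :
    ((√(B i i).re : ℝ) : ℂ) ≠ 0 :=
  left_ne_zero_of_mul ((hB.ofReal_sqrt_re_diag_mul_self i).symm ▸ hB.diag_pos.ne')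

theorem isUnit_det_sqrtDiag (hB : B.PosDef) : IsUnit (sqrtDiag B).det := by
  rw [sqrtDiag, det_diagonal, isUnit_iff_ne_zero]
  exact Finset.prod_ne_zero_iff.2 fun i _ => hB.ofReal_sqrt_re_diag_ne_zero i

theorem inv_sqrtDiag (hB : B.PosDef) :
    (sqrtDiag B)⁻¹ = diagonal fun i => ((√(B i i).re : ℝ) : ℂ)⁻¹ := by
  refine inv_eq_right_inv ?_
  rw [sqrtDiag, diagonal_mul_diagonal, ← diagonal_one]
  exact congrArg diagonal (funext fun i => mul_inv_cancel₀ (hB.ofReal_sqrt_re_diag_ne_zero i))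

theorem hatM_apply (hB : B.PosDef) (i j : Fin n) :
    hatM B i j = ((√(B i i).re : ℝ) : ℂ)⁻¹ * B i j * ((√(B j j).re : ℝ) : ℂ)⁻¹ := by
  rw [hatM, inv_sqrtDiag hB, mul_diagonal, diagonal_mul]

theorem hatM_apply_self (hB : B.PosDef) (i : Fin n) : hatM B i i = 1 := by
  rw [hatM_apply hB]
  calc _ = (((√(B i i).re : ℝ) : ℂ) * ((√(B i i).re : ℝ) : ℂ))⁻¹ * B i i := by ring
    _ = 1 := by rw [hB.ofReal_sqrt_re_diag_mul_self i, inv_mul_cancel₀ hB.diag_pos.ne']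

theorem hatM_posDef (hB : B.PosDef) : (hatM B).PosDef := by
  have hD : (sqrtDiag B)⁻¹.IsHermitian :=
    (isHermitian_diagonal_of_self_adjoint _ (funext fun i => Complex.conj_ofReal _)).inv
  have := hB.conjTranspose_mul_mul_same (mulVec_injective_of_isUnit
    ((isUnit_iff_isUnit_det _).2 (isUnit_nonsing_inv_det _ (isUnit_det_sqrtDiag hB))))
  rwa [hD.eq] at this

theorem inv_hatM (hB : B.PosDef) : (hatM B)⁻¹ = sqrtDiag B * B⁻¹ * sqrtDiag B := by
  rw [hatM, Matrix.mul_inv_rev, Matrix.mul_inv_rev,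
    nonsing_inv_nonsing_inv _ (isUnit_det_sqrtDiag hB), mul_assoc]

theorem gamma_eq_re_trace_hadamard_sub (hB : B.PosDef) :
    Gamma B = (trace (B ⊙ B⁻¹)).re - n := by
  rw [Gamma, inv_hatM hB]
  congr 2
  refine Finset.sum_congr rfl fun i _ => ?_
  rw [diag_apply, diag_apply, hadamard_apply, sqrtDiag, mul_diagonal, diagonal_mul]
  linear_combination B⁻¹ i i * hB.ofReal_sqrt_re_diag_mul_self i

theorem hatM_sub_one_ne_zero (hB : B.PosDef) (hnd : ¬ B.IsDiag) : hatM B - 1 ≠ 0 := by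
  obtain ⟨i, j, hij, hBij⟩ : ∃ i j, i ≠ j ∧ B i j ≠ 0 := by simpa [IsDiag, Pairwise] using hnd
  intro h
  have hij' := congrFun (congrFun h i) j
  rw [Matrix.sub_apply, one_apply_ne hij, sub_zero, hatM_apply hB] at hij'
  simp [hBij, hB.ofReal_sqrt_re_diag_ne_zero] at hij'

theorem gamma_eq_re_trace_conjTranspose_mul_inv_mul (hB : B.PosDef) :
    Gamma B = (trace ((hatM B - 1)ᴴ * (hatM B)⁻¹ * (hatM B - 1))).re := by
  have hA := hatM_posDef hB
  have hAdet : IsUnit (hatM B).det := (isUnit_iff_isUnit_det _).1 hA.isUnit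
  have hconj : (hatM B - 1)ᴴ * (hatM B)⁻¹ * (hatM B - 1) = ((hatM B)⁻¹ - 1) + (hatM B - 1) := by
    rw [conjTranspose_sub, conjTranspose_one, hA.isHermitian.eq]
    simp only [sub_mul, mul_sub, mul_nonsing_inv _ hAdet, nonsing_inv_mul _ hAdet, one_mul,
      mul_one]
    abel
  have htrace : trace (hatM B) = n := by simp [trace, hatM_apply_self hB]
  rw [hconj, trace_add, trace_sub, trace_sub, trace_one, Fintype.card_fin, htrace, sub_self,
    add_zero, Complex.sub_re, Complex.natCast_re, Gamma]

theorem gamma_pos (hB : B.PosDef) (hnd : ¬ B.IsDiag) : 0 < Gamma B := by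
  rw [gamma_eq_re_trace_conjTranspose_mul_inv_mul hB]
  exact (Complex.pos_iff.1
    ((hatM_posDef hB).inv.trace_conjTranspose_mul_mul_pos (hatM_sub_one_ne_zero hB hnd))).1

theorem sum_offDiag_re_mul_inv_apply (hB : B.PosDef) :
    ∑ p ∈ Finset.univ.offDiag, (B p.1 p.2 * B⁻¹ p.2 p.1).re = -Gamma B := by
  have h := B.sum_offDiag_mul_apply_add_trace_hadamard B⁻¹
  rw [mul_nonsing_inv _ ((isUnit_iff_isUnit_det _).1 hB.isUnit), trace_one, Fintype.card_fin] at h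
  rw [gamma_eq_re_trace_hadamard_sub hB, ← Complex.re_sum, eq_sub_of_add_eq h]
  simp

theorem exists_offDiag_re_mul_inv_apply_le (hB : B.PosDef) (hn : 2 ≤ n) :
    ∃ p ∈ Finset.univ.offDiag,
      (B p.1 p.2 * B⁻¹ p.2 p.1).re ≤ -(Gamma B / ((n : ℝ) * ((n : ℝ) - 1))) := by
  have hne : (Finset.univ : Finset (Fin n)).offDiag.Nonempty :=
    ⟨(⟨0, by omega⟩, ⟨1, by omega⟩), by simp [Fin.ext_iff]⟩
  have hcard : ((Finset.univ : Finset (Fin n)).offDiag.card : ℝ) = n * (n - 1) := by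
    rw [Finset.offDiag_card, Finset.card_univ, Fintype.card_fin,
      Nat.cast_sub (Nat.le_mul_self n), Nat.cast_mul]
    ring
  refine Finset.exists_le_of_expect_le hne (le_of_eq ?_)
  rw [Finset.expect_eq_sum_div_card, sum_offDiag_re_mul_inv_apply hB, ← hcard, neg_div]

theorem gamma_conj_embedJ_pair (hB : B.PosDef) {i j : Fin n} (hij : i ≠ j)
    {S : Matrix (Fin 2) (Fin 2) ℂ} (hS : IsUnit S.det)
    (hD : (Sᴴ * subJ {i, j} (Finset.card_pair hij) B * S).IsDiag) :
    Gamma ((embedJ {i, j} (Finset.card_pair hij) S)ᴴ * B * embedJ {i, j} (Finset.card_pair hij) S) =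
      Gamma B + 2 * (B i j * B⁻¹ j i).re := by
  have hM := hB.conjTranspose_mul_mul_same (mulVec_injective_of_isUnit
    ((isUnit_iff_isUnit_det _).2 (isUnit_det_embedJ _ (Finset.card_pair hij) hS)))
  have htrace := congrArg Complex.re (trace_hadamard_conj_embedJ _ _ B hS hD)
  have hsymm : (B j i * B⁻¹ i j).re = (B i j * B⁻¹ j i).re := by
    rw [← hB.isHermitian.apply, ← hB.isHermitian.inv.apply, ← star_mul', Complex.star_def,
      Complex.conj_re]
  rw [trace_subJ_pair_mul hij] at htrace
  simp only [Complex.add_re] at htrace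
  rw [gamma_eq_re_trace_hadamard_sub hM, gamma_eq_re_trace_hadamard_sub hB]
  linarith

end Gamma

/-- greedy pivoting: if `B` is Hermitian positive definite and not
diagonal, there are indices `i ≠ j` with `Re(b_{ij}(B⁻¹)_{ji}) ≤ −Γ(B)/(n(n−1)) < 0`,
and one exact pivot step on `{i,j}` decreases `Γ` by the factor `1 − 2/(n(n−1))`. -/
theorem greedy_pivot_decreases_gamma {n : ℕ} (hn : 2 ≤ n)
    (B : Matrix (Fin n) (Fin n) ℂ) (hB : B.PosDef) (hnd : ¬ B.IsDiag) :
    ∃ (i j : Fin n) (hij : i ≠ j),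
      (B i j * B⁻¹ j i).re ≤ -(Gamma B / ((n : ℝ) * ((n : ℝ) - 1))) ∧
      -(Gamma B / ((n : ℝ) * ((n : ℝ) - 1))) < 0 ∧
      ∀ S : Matrix (Fin 2) (Fin 2) ℂ, IsUnit S.det →
        (Sᴴ * subJ {i, j} (Finset.card_pair hij) B * S).IsDiag →
        Gamma (((embedJ {i, j} (Finset.card_pair hij) S⁻¹)⁻¹)ᴴ * B *
            (embedJ {i, j} (Finset.card_pair hij) S⁻¹)⁻¹) ≤
          (1 - 2 / ((n : ℝ) * ((n : ℝ) - 1))) * Gamma B := by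
  have hq : 0 < (n : ℝ) * ((n : ℝ) - 1) := by
    have : (2 : ℝ) ≤ n := by exact_mod_cast hn
    nlinarith
  obtain ⟨⟨i, j⟩, hmem, hle⟩ := exists_offDiag_re_mul_inv_apply_le hB hn
  have hij : i ≠ j := (Finset.mem_offDiag.1 hmem).2.2
  refine ⟨i, j, hij, hle, neg_neg_of_pos (div_pos (gamma_pos hB hnd) hq), fun S hS hD => ?_⟩
  rw [inv_embedJ _ _ _ (isUnit_nonsing_inv_det S hS), nonsing_inv_nonsing_inv S hS,
    gamma_conj_embedJ_pair hB hij hS hD]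
  have hfactor : (1 - 2 / ((n : ℝ) * ((n : ℝ) - 1))) * Gamma B =
      Gamma B - 2 * (Gamma B / ((n : ℝ) * ((n : ℝ) - 1))) := by ring
  linarith
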